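/- arXiv:2504.18339 — 3 statements merged into one kernel-verified Lean document; each statement's English description precedes it below -/
import Mathlib

section
/- Let t₁, t₂, t₃ ∈ ℝ² be non-collinear tower positions with calibrated source intensities s_c⁽¹⁾, s_c⁽²⁾, s_c⁽³⁾ > 0, and define the sensor map h : ℝ² → ℝ³ by h(x)ᵢ = s_c⁽ⁱ⁾/(1 + ‖x − tᵢ‖²) for i = 1,2,3. Then h is injective. -/
/-!
Each intensity `s / (1 + r²)` is strictly decreasing in the distance `r ≥ 0`, so two receivers
with the same readings are equidistant from every tower. The towers then all lie on the
perpendicular bisector of the two receivers, and since they affinely span the plane, that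
bisector is the whole plane, which forces the receivers to coincide.
-/

theorem injOn_div_one_add_sq {K : Type*} [Field K] [LinearOrder K] [IsStrictOrderedRing K]
    {s : K} (hs : s ≠ 0) : Set.InjOn (fun r : K => s / (1 + r ^ 2)) (Set.Ici 0) := by
  intro a ha b hb hab
  simp only [div_eq_mul_inv, mul_right_inj' hs, inv_inj, add_right_inj] at hab
  exact (sq_eq_sq₀ ha hb).1 hab

theorem eq_of_forall_dist_eq_of_affineSpan_eq_top {V P ι : Type*} [NormedAddCommGroup V]
    [InnerProductSpace ℝ V] [MetricSpace P] [NormedAddTorsor V P] {p : ι → P}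
    (hp : affineSpan ℝ (Set.range p) = ⊤) {x y : P} (h : ∀ i, dist x (p i) = dist y (p i)) :
    x = y := by
  rw [← AffineSubspace.perpBisector_eq_top, eq_top_iff, ← hp, affineSpan_le]
  rintro _ ⟨i, rfl⟩
  exact AffineSubspace.mem_perpBisector_iff_dist_eq'.2 (h i)

/-- With non-collinear tower positions `t i` and calibrated source
intensities `s_c i > 0`, the sensor map `h(x) i = s_c i / (1 + ‖x - t i‖²)` is injective. -/
theorem sensor_map_injective
    (t : Fin 3 → EuclideanSpace ℝ (Fin 2)) (ht : AffineIndependent ℝ t)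
    (s_c : Fin 3 → ℝ) (hs : ∀ i, 0 < s_c i) :
    Function.Injective
      (fun x : EuclideanSpace ℝ (Fin 2) => fun i : Fin 3 => s_c i / (1 + ‖x - t i‖ ^ 2)) := by
  intro x y hxy
  have hspan : affineSpan ℝ (Set.range t) = ⊤ :=
    ht.affineSpan_eq_top_iff_card_eq_finrank_add_one.2 (by simp)
  refine eq_of_forall_dist_eq_of_affineSpan_eq_top hspan fun i => ?_
  rw [dist_eq_norm, dist_eq_norm]
  exact injOn_div_one_add_sq (hs i).ne' (norm_nonneg _) (norm_nonneg _) (congrFun hxy i)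
end

section
/- Let K ∈ ℝ, let A be the 4×4 real block matrix A = [[I₂, K·I₂],[0, I₂]] and B the 4×2 real block matrix B = [[0₂],[−I₂]] (where I₂ and 0₂ are the 2×2 identity and zero matrices). Then the controllability matrix Co = [B | AB | A²B | A³B] ∈ ℝ^{4×8} has rank 4 if and only if K ≠ 0. -/
/-!
Writing `A = [[1, K], [0, 1]]` and `B = [[0], [-1]]` in blocks, `A * B = [[-K], [-1]]`, so the
first two column blocks `[A * B | B] = [[-K, 0], [-1, -1]]` form a block lower triangular matrix
of determinant `K ^ 2`: for `K ≠ 0` they already have full row rank. For `K = 0` we have `A = 1`,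
so every column block is `B` and the rank is at most `2`.
-/

namespace Matrix

variable {R m p : Type*}

def controllabilityMatrix [Semiring R] [Fintype m] [DecidableEq m] (A : Matrix m m R)
    (B : Matrix m p R) (N : ℕ) : Matrix m (Fin N × p) R :=
  of fun i kj => (A ^ (kj.1 : ℕ) * B) i kj.2

section Rank

variable [CommRing R] [StrongRankCondition R] [Fintype m] [DecidableEq m] [Fintype p]

theorem rank_controllabilityMatrix_one_le (B : Matrix m p R) (N : ℕ) :
    (controllabilityMatrix 1 B N).rank ≤ B.rank := by
  have hCo : controllabilityMatrix 1 B N = B.submatrix id Prod.snd := by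
    ext i kj
    simp [controllabilityMatrix]
  rw [hCo]
  exact rank_submatrix_le B id Prod.snd

theorem rank_fromCols_mul_le_rank_controllabilityMatrix (A : Matrix m m R) (B : Matrix m p R)
    {N : ℕ} (hN : 2 ≤ N) :
    (fromCols (A * B) B).rank ≤ (controllabilityMatrix A B N).rank := by
  have hCols : fromCols (A * B) B = (controllabilityMatrix A B N).submatrix id
      (Sum.elim (fun j => (⟨1, hN⟩, j)) (fun j => (⟨0, by omega⟩, j))) := by
    ext i (j | j) <;> simp [controllabilityMatrix]
  rw [hCols]
  exact rank_submatrix_le _ _ _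

end Rank

end Matrix

open Matrix

section Receiver

/-- The state matrix of `ω' = ω + K e`, `e' = e - u` in the state `(ω, e)`. -/
abbrev receiverStateMatrix (n : Type*) [DecidableEq n] {R : Type*} [Ring R] (K : R) :
    Matrix (n ⊕ n) (n ⊕ n) R :=
  fromBlocks 1 (K • 1) 0 1

abbrev receiverInputMatrix (n R : Type*) [DecidableEq n] [Ring R] : Matrix (n ⊕ n) n R :=
  fromRows 0 (-1)

variable {R n : Type*} [Fintype n] [DecidableEq n]

theorem receiverStateMatrix_mul_receiverInputMatrix [Ring R] (K : R) :
    receiverStateMatrix n K * receiverInputMatrix n R = fromRows (-K • 1) (-1) := by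
  rw [fromBlocks_mul_fromRows]
  congr 1 <;> simp

variable [Field R]

theorem rank_fromBlocks_neg_smul_one_zero_neg_one {K : R} (hK : K ≠ 0) :
    (fromBlocks (-K • 1) 0 (-1) (-1) : Matrix (n ⊕ n) (n ⊕ n) R).rank =
      Fintype.card n + Fintype.card n := by
  have hdet : IsUnit (fromBlocks (-K • 1) 0 (-1) (-1) : Matrix (n ⊕ n) (n ⊕ n) R).det := by
    rw [det_fromBlocks_zero₁₂, det_smul, det_neg, det_one]
    simp [hK]
  rw [rank_of_isUnit _ ((isUnit_iff_isUnit_det _).mpr hdet), Fintype.card_sum]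

theorem rank_controllabilityMatrix_receiver_eq_iff [Nonempty n] (K : R) {N : ℕ} (hN : 2 ≤ N) :
    (controllabilityMatrix (receiverStateMatrix n K) (receiverInputMatrix n R)
      N).rank = Fintype.card n + Fintype.card n ↔ K ≠ 0 := by
  constructor
  · rintro hrank rfl
    have hCo := rank_controllabilityMatrix_one_le (receiverInputMatrix n R) N
    have hB := rank_le_card_width (receiverInputMatrix n R)
    rw [receiverStateMatrix, zero_smul, fromBlocks_one] at hrank
    have := Fintype.card_pos (α := n)
    omega
  · intro hK
    refine le_antisymm ?_ ?_
    · simpa using rank_le_card_height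
        (controllabilityMatrix (receiverStateMatrix n K) (receiverInputMatrix n R) N)
    · have := rank_fromCols_mul_le_rank_controllabilityMatrix (receiverStateMatrix n K)
        (receiverInputMatrix n R) hN
      rwa [receiverStateMatrix_mul_receiverInputMatrix, receiverInputMatrix,
        fromCols_fromRows_eq_fromBlocks, rank_fromBlocks_neg_smul_one_zero_neg_one hK] at this

end Receiver

/-- With `A = [[I₂, K·I₂],[0, I₂]]` and `B = [[0₂],[-I₂]]`, the controllability
matrix `Co = [B | AB | A²B | A³B]` (a 4×8 matrix, here indexed by `(Fin 2 ⊕ Fin 2) × (Fin 4 × Fin 2)`,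
with column block `k` equal to `Aᵏ * B`) has rank 4 if and only if `K ≠ 0`. -/
theorem controllability_rank_iff (K : ℝ) :
    let A : Matrix (Fin 2 ⊕ Fin 2) (Fin 2 ⊕ Fin 2) ℝ :=
      Matrix.fromBlocks 1 (K • (1 : Matrix (Fin 2) (Fin 2) ℝ)) 0 1
    let B : Matrix (Fin 2 ⊕ Fin 2) (Fin 2) ℝ :=
      Matrix.fromRows (0 : Matrix (Fin 2) (Fin 2) ℝ) (-(1 : Matrix (Fin 2) (Fin 2) ℝ))
    let Co : Matrix (Fin 2 ⊕ Fin 2) (Fin 4 × Fin 2) ℝ :=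
      Matrix.of fun i kj => (A ^ (kj.1 : ℕ) * B) i kj.2
    Co.rank = 4 ↔ K ≠ 0 := by
  intro A B Co
  exact rank_controllabilityMatrix_receiver_eq_iff K (N := 4) (by norm_num)
end

section
/- Let K ∈ ℝ with K ≠ 0, and consider the dynamics ω_{k+1} = ω_k + K·(x_G^r − ι_k), ι_{k+1} = ι_k + u_k with ω_k, ι_k, u_k ∈ ℝ². For any initial state (ω₁, ι₁) ∈ ℝ² × ℝ², any receiver goal x_G^r ∈ ℝ², and any producer goal x_G^p ∈ ℝ², there exist producer actions u₁, u₂ ∈ ℝ² such that ω₃ = x_G^p and ι₃ = x_G^r; moreover, applying u_k = 0 for all k ≥ 3 keeps the state fixed at (x_G^p, x_G^r) for all subsequent stages. -/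
/-!
The producer controls the receiver's estimate completely, while the true position only integrates
`K • (x_G^r - ι_k)`. So it first moves the estimate to a decoy `ι₂`, chosen so that the two
receiver steps from `ω₁` (driven by `ι₁` and then `ι₂`) land exactly on `x_G^p`, and then moves the
estimate to `x_G^r`. From then on the receiver believes it is at its goal, its action vanishes,
and with `u_k = 0` nothing moves again.
-/

section

variable {E : Type*}

def estimatePath (ι₁ ι₂ xGr : E) (k : ℕ) : E :=
  if k ≤ 1 then ι₁ else if k = 2 then ι₂ else xGr

lemma estimatePath_of_three_le (ι₁ ι₂ xGr : E) {k : ℕ} (hk : 3 ≤ k) :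
    estimatePath ι₁ ι₂ xGr k = xGr := by
  simp only [estimatePath, if_neg (show ¬k ≤ 1 by omega), if_neg (show k ≠ 2 by omega)]

lemma estimatePath_succ_sub_of_three_le [AddGroup E] (ι₁ ι₂ xGr : E) {k : ℕ} (hk : 3 ≤ k) :
    estimatePath ι₁ ι₂ xGr (k + 1) - estimatePath ι₁ ι₂ xGr k = 0 := by
  rw [estimatePath_of_three_le _ _ _ hk, estimatePath_of_three_le _ _ _ (by omega), sub_self]

end

section

variable {𝕜 E : Type*} [Field 𝕜] [AddCommGroup E] [Module 𝕜 E]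

def decoyEstimate (K : 𝕜) (ω₁ ι₁ xGr xGp : E) : E :=
  K⁻¹ • (ω₁ - xGp) + (2 : 𝕜) • xGr - ι₁

lemma add_smul_add_smul_decoyEstimate {K : 𝕜} (hK : K ≠ 0) (ω₁ ι₁ xGr xGp : E) :
    ω₁ + K • (xGr - ι₁) + K • (xGr - decoyEstimate K ω₁ ι₁ xGr xGp) = xGp := by
  simp only [decoyEstimate]
  match_scalars <;> field_simp <;> ring

end

lemma eq_of_forall_succ_eq_add_sub {G : Type*} [AddCommGroup G] {s x : ℕ → G} (h₁ : x 1 = s 1)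
    (h : ∀ k ≥ 1, x (k + 1) = x k + (s (k + 1) - s k)) : ∀ k ≥ 1, x k = s k := by
  intro k hk
  induction k, hk using Nat.le_induction with
  | base => exact h₁
  | succ k hk ih => rw [h k hk, ih, add_sub_cancel]

lemma eq_of_forall_succ_eq {α : Type*} {f : ℕ → α} {n : ℕ} (h : ∀ k ≥ n, f (k + 1) = f k) :
    ∀ k ≥ n, f k = f n := by
  intro k hk
  induction k, hk using Nat.le_induction with
  | base => rfl
  | succ k hk ih => rw [h k hk, ih]

/-- For the dynamics `ω_{k+1} = ω_k + K·(x_G^r - ι_k)`, `ι_{k+1} = ι_k + u_k`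
with `K ≠ 0`, from any initial state `(ω₁, ι₁)` there exist producer actions (with `u_k = 0`
for all `k ≥ 3`) such that `ω₃ = x_G^p` and `ι₃ = x_G^r`, and the state stays at
`(x_G^p, x_G^r)` for all subsequent stages. -/
theorem producer_two_step_reachability
    (K : ℝ) (hK : K ≠ 0)
    (ω₁ ι₁ xGr xGp : EuclideanSpace ℝ (Fin 2)) :
    ∃ u : ℕ → EuclideanSpace ℝ (Fin 2),
      (∀ k ≥ 3, u k = 0) ∧
      ∀ ω ι : ℕ → EuclideanSpace ℝ (Fin 2),
        ω 1 = ω₁ → ι 1 = ι₁ →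
        (∀ k ≥ 1, ω (k + 1) = ω k + K • (xGr - ι k)) →
        (∀ k ≥ 1, ι (k + 1) = ι k + u k) →
        ω 3 = xGp ∧ ι 3 = xGr ∧ ∀ k ≥ 3, ω k = xGp ∧ ι k = xGr := by
  set s := estimatePath ι₁ (decoyEstimate K ω₁ ι₁ xGr xGp) xGr
  refine ⟨fun k => s (k + 1) - s k, fun k hk => estimatePath_succ_sub_of_three_le _ _ _ hk, ?_⟩
  intro ω ι hω₁ hι₁ hω hι
  have hι_eq : ∀ k ≥ 1, ι k = s k := eq_of_forall_succ_eq_add_sub hι₁ hι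
  have hι_goal : ∀ k ≥ 3, ι k = xGr := fun k hk =>
    (hι_eq k (by omega)).trans (estimatePath_of_three_le _ _ _ hk)
  have hω₃ : ω 3 = xGp := by
    rw [hω 2 (by norm_num), hω 1 le_rfl, hω₁, hι_eq 1 le_rfl, hι_eq 2 (by norm_num)]
    exact add_smul_add_smul_decoyEstimate hK ω₁ ι₁ xGr xGp
  have hω_stays : ∀ k ≥ 3, ω (k + 1) = ω k := fun k hk => by
    rw [hω k (by omega), hι_goal k hk, sub_self, smul_zero, add_zero]
  exact ⟨hω₃, hι_goal 3 le_rfl, fun k hk =>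
    ⟨(eq_of_forall_succ_eq hω_stays k hk).trans hω₃, hι_goal k hk⟩⟩
end
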